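/- Exact Fourier identity for the second filtered integral: for sufficiently regular functions $v, w$ on $\mathbb{T}$, $\int_0^\tau e^{-is\partial_x^2}\big[(e^{-is\partial_x^2}\overline{v})\, e^{is\partial_x^2} w^2\big] ds = \frac{i}{2}e^{-i\tau\partial_x^2}\partial_x^{-1}\big[(e^{-i\tau\partial_x^2}\partial_x^{-1}\overline{v})\,(e^{i\tau\partial_x^2}w^2)\big] - \frac{i}{2}\partial_x^{-1}(w^2\,\partial_x^{-1}\overline{v}) + \tau\widehat{(\overline{v}w^2)}_0 + \tau \overline{\hat{v}_0}(w^2 - \widehat{(w^2)}_0)$. -/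

import Mathlib

/-- Japanese bracket. -/
noncomputable def jap (x : ℝ) : ℝ := Real.sqrt (1 + x ^ 2)

/-- A function on `𝕋` is represented by its Fourier coefficients `c : ℤ → ℂ`.
`pc a b` is the Fourier coefficient sequence of the pointwise product. -/
noncomputable def pc (a b : ℤ → ℂ) : ℤ → ℂ := fun k => ∑' j : ℤ, a j * b (k - j)

/-- Fourier coefficients of the complex conjugate function. -/
noncomputable def cconj (c : ℤ → ℂ) : ℤ → ℂ := fun k => starRingEnd ℂ (c (-k))

/-- Fourier coefficients of `e^{it∂ₓ²} f` (multiplication by `e^{-itk²}`). -/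
noncomputable def eS (t : ℝ) (c : ℤ → ℂ) : ℤ → ℂ :=
  fun k => Complex.exp (-(Complex.I) * t * (k : ℝ) ^ 2) * c k

/-- Fourier coefficients of `∂ₓ⁻¹ f = ∑_{k≠0} (ik)⁻¹ f̂ₖ e^{ikx}`. -/
noncomputable def pinv (c : ℤ → ℂ) : ℤ → ℂ :=
  fun k => if k = 0 then 0 else c k / (Complex.I * k)

/-- Fourier coefficients of `∂ₓ f`. -/
noncomputable def dx (c : ℤ → ℂ) : ℤ → ℂ := fun k => Complex.I * k * c k

/-- Fourier coefficients of `∂ₓ² f`. -/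
noncomputable def dx2 (c : ℤ → ℂ) : ℤ → ℂ := fun k => (Complex.I * k) ^ 2 * c k

/-- "Sufficiently regular": Fourier coefficients decay faster than any polynomial. -/
def Regular (c : ℤ → ℂ) : Prop :=
  ∀ j : ℕ, Summable fun k : ℤ => jap k ^ (j : ℝ) * ‖c k‖

/-!
In Fourier variables the `k`-th mode of the integrand is a sum over `j` of
`v̄_j (w²)_{k-j}` times the phase `e^{is(k² + j² - (k-j)²)} = e^{2iskj}`.
Since `v̄ ∈ ℓ¹` and `w²` is bounded, sum and integral may be interchanged, and each mode
integrates exactly: the resonant modes `kj = 0` give `τ`, the others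
`(e^{2iτkj} - 1)/(2ikj) = (i/2)(ik)⁻¹ (e^{2iτkj} - 1)(ij)⁻¹`. The second factor `(ij)⁻¹` is the
symbol of `∂ₓ⁻¹` applied to `v̄`, the first that of `∂ₓ⁻¹` applied to the product, and
`e^{2iτkj}` splits back into the three free flows at time `τ`.
-/

open Complex

lemma Regular.summable_norm {c : ℤ → ℂ} (hc : Regular c) : Summable fun k => ‖c k‖ := by
  simpa using hc 0

lemma summable_norm_cconj {c : ℤ → ℂ} (hc : Summable fun k => ‖c k‖) :
    Summable fun k => ‖cconj c k‖ := by
  simpa [cconj, Function.comp_def] using (Equiv.neg ℤ).summable_iff.2 hc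

lemma norm_pc_le {a b : ℤ → ℂ} (ha : Summable fun k => ‖a k‖)
    (hb : Summable fun k => ‖b k‖) (m : ℤ) :
    ‖pc a b m‖ ≤ (∑' k, ‖a k‖) * ∑' k, ‖b k‖ := by
  have hle : ∀ j, ‖a j * b (m - j)‖ ≤ ‖a j‖ * ∑' k, ‖b k‖ := fun j => by
    rw [norm_mul]
    exact mul_le_mul_of_nonneg_left (hb.le_tsum _ fun _ _ => norm_nonneg _) (norm_nonneg _)
  have hsum : Summable fun j => ‖a j * b (m - j)‖ :=
    .of_nonneg_of_le (fun _ => norm_nonneg _) hle (ha.mul_right _)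
  calc ‖pc a b m‖ ≤ ∑' j, ‖a j * b (m - j)‖ := norm_tsum_le_tsum_norm hsum
    _ ≤ ∑' j, ‖a j‖ * ∑' k, ‖b k‖ := hsum.tsum_le_tsum hle (ha.mul_right _)
    _ = (∑' k, ‖a k‖) * ∑' k, ‖b k‖ := tsum_mul_right

lemma pc_comm (a b : ℤ → ℂ) : pc a b = pc b a := by
  funext k
  rw [pc, pc, ← (Equiv.subLeft k).tsum_eq]
  simp [Equiv.subLeft, mul_comm]

lemma norm_eS (t : ℝ) (c : ℤ → ℂ) (m : ℤ) : ‖eS t c m‖ = ‖c m‖ := by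
  rw [eS, norm_mul, show -I * t * ((m : ℝ) : ℂ) ^ 2 = ((-(t * m ^ 2) : ℝ) : ℂ) * I by
    push_cast; ring, norm_exp_ofReal_mul_I, one_mul]

lemma norm_pinv_le (c : ℤ → ℂ) (m : ℤ) : ‖pinv c m‖ ≤ ‖c m‖ := by
  rcases eq_or_ne m 0 with rfl | hm
  · simp [pinv]
  · rw [pinv, if_neg hm, norm_div, norm_mul, norm_I, one_mul]
    exact div_le_self (norm_nonneg _) (by simpa using (Int.cast_le (R := ℝ)).2 (Int.one_le_abs hm))

lemma exp_mul_eS_mul_eS (s : ℝ) (c d : ℤ → ℂ) (k j : ℤ) :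
    exp (I * s * (k : ℝ) ^ 2) * (eS (-s) c j * eS s d (k - j)) =
      c j * d (k - j) * exp ((2 * k * j * s : ℝ) * I) := by
  -- `k² + j² - (k - j)² = 2kj`
  have phase : exp (I * s * (k : ℝ) ^ 2) * exp (-I * (-s : ℝ) * (j : ℝ) ^ 2) *
      exp (-I * s * ((k - j : ℤ) : ℝ) ^ 2) = exp ((2 * k * j * s : ℝ) * I) := by
    rw [← exp_add, ← exp_add]
    congr 1
    push_cast
    ring
  rw [eS, eS, ← phase]
  ring

lemma integral_exp_ofReal_mul_I (θ τ : ℝ) :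
    ∫ s in (0 : ℝ)..τ, exp ((θ * s : ℝ) * I) =
      if θ = 0 then (τ : ℂ) else (exp ((θ * τ : ℝ) * I) - 1) / (θ * I) := by
  split_ifs with hθ
  · simp [hθ]
  · have hθI : (θ : ℂ) * I ≠ 0 := mul_ne_zero (ofReal_ne_zero.2 hθ) I_ne_zero
    simp_rw [ofReal_mul, mul_right_comm _ _ I]
    rw [integral_exp_mul_complex hθI]
    simp

lemma hasSum_integral_mul_exp {a : ℤ → ℂ} (ha : Summable fun j => ‖a j‖) (θ : ℤ → ℝ)
    (τ : ℝ) :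
    HasSum (fun j => ∫ s in (0 : ℝ)..τ, a j * exp ((θ j * s : ℝ) * I))
      (∫ s in (0 : ℝ)..τ, ∑' j, a j * exp ((θ j * s : ℝ) * I)) := by
  have hnorm : ∀ j (s : ℝ), ‖a j * exp ((θ j * s : ℝ) * I)‖ = ‖a j‖ := fun j s => by
    rw [norm_mul, norm_exp_ofReal_mul_I, mul_one]
  refine intervalIntegral.hasSum_integral_of_dominated_convergence (fun j _ => ‖a j‖)
    (fun j => by fun_prop) (fun j => .of_forall fun s _ => (hnorm j s).le)
    (.of_forall fun _ _ => ha) intervalIntegrable_const (.of_forall fun s _ => ?_)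
  exact (Summable.of_norm (by simpa only [hnorm] using ha)).hasSum

lemma mul_integral_exp_eq_of_ne_zero (τ : ℝ) (c d : ℤ → ℂ) {k : ℤ} (hk : k ≠ 0) (j : ℤ) :
    c j * d (k - j) * ∫ s in (0 : ℝ)..τ, exp ((2 * k * j * s : ℝ) * I) =
      I / 2 / (I * k) *
          (exp (I * τ * (k : ℝ) ^ 2) * (eS (-τ) (pinv c) j * eS τ d (k - j))
            - pinv c j * d (k - j))
        + if j = 0 then τ * c 0 * d k else 0 := by
  rw [integral_exp_ofReal_mul_I, exp_mul_eS_mul_eS]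
  rcases eq_or_ne j 0 with rfl | hj
  · simp [pinv]
    ring
  · have hkC : (k : ℂ) ≠ 0 := Int.cast_ne_zero.2 hk
    have hjC : (j : ℂ) ≠ 0 := Int.cast_ne_zero.2 hj
    rw [if_neg (by simp [hk, hj]), if_neg hj, pinv, if_neg hj]
    push_cast
    field_simp
    ring

lemma summable_norm_mul_shift {c f g : ℤ → ℂ} {C : ℝ} (hc : Summable fun j => ‖c j‖)
    (hf : ∀ j, ‖f j‖ ≤ ‖c j‖) (hg : ∀ m, ‖g m‖ ≤ C) (k : ℤ) :
    Summable fun j => ‖f j * g (k - j)‖ :=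
  .of_nonneg_of_le (fun _ => norm_nonneg _)
    (fun j => (norm_mul _ _).trans_le (mul_le_mul (hf j) (hg _) (norm_nonneg _)
      ((norm_nonneg _).trans (hf j))))
    (hc.mul_right C)

section

variable {c d : ℤ → ℂ} {C : ℝ} (hc : Summable fun j => ‖c j‖) (hd : ∀ m, ‖d m‖ ≤ C)
include hc hd

lemma integral_exp_mul_pc_eS (τ : ℝ) (k : ℤ) :
    ∫ s in (0 : ℝ)..τ, exp (I * s * (k : ℝ) ^ 2) * pc (eS (-s) c) (eS s d) k =
      ∑' j, c j * d (k - j) * ∫ s in (0 : ℝ)..τ, exp ((2 * k * j * s : ℝ) * I) := by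
  simp_rw [← intervalIntegral.integral_const_mul]
  rw [(hasSum_integral_mul_exp (summable_norm_mul_shift hc (fun _ => le_rfl) hd k)
    (fun j => 2 * k * j) τ).tsum_eq]
  congr 1 with s
  rw [pc, ← tsum_mul_left]
  simp_rw [exp_mul_eS_mul_eS]

lemma tsum_mul_integral_exp_of_ne_zero (τ : ℝ) {k : ℤ} (hk : k ≠ 0) :
    ∑' j, c j * d (k - j) * ∫ s in (0 : ℝ)..τ, exp ((2 * k * j * s : ℝ) * I) =
      I / 2 * exp (I * τ * (k : ℝ) ^ 2) * pinv (pc (eS (-τ) (pinv c)) (eS τ d)) k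
        - I / 2 * pinv (pc d (pinv c)) k + τ * c 0 * d k := by
  have hd' : ∀ m, ‖eS τ d m‖ ≤ C := fun m => (norm_eS τ d m).trans_le (hd m)
  have h₁ := (summable_norm_mul_shift hc (fun j => (norm_eS (-τ) _ j).trans_le (norm_pinv_le c j))
    hd' k).of_norm
  have h₂ := (summable_norm_mul_shift hc (norm_pinv_le c) hd k).of_norm
  rw [tsum_congr (mul_integral_exp_eq_of_ne_zero τ c d hk),
    Summable.tsum_add (((h₁.mul_left _).sub h₂).mul_left _) (hasSum_ite_eq 0 _).summable,
    tsum_mul_left, Summable.tsum_sub (h₁.mul_left _) h₂, tsum_mul_left, tsum_ite_eq,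
    pc_comm d, pinv, pinv, if_neg hk, if_neg hk, pc, pc]
  ring

end

lemma tsum_mul_integral_exp_zero (τ : ℝ) (c d : ℤ → ℂ) :
    ∑' j, c j * d (0 - j) * ∫ s in (0 : ℝ)..τ, exp ((2 * (0 : ℤ) * j * s : ℝ) * I) =
      τ * pc c d 0 := by
  simp [pc, ← tsum_mul_left, mul_comm]

theorem second_filtered_integral_identity_general (τ : ℝ)
    (v w : ℤ → ℂ) (hv : Regular v) (hw : Regular w) :
    ∀ k : ℤ,
      (∫ s in (0 : ℝ)..τ,
          Complex.exp (Complex.I * s * (k : ℝ) ^ 2) *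
            pc (eS (-s) (cconj v)) (eS s (pc w w)) k) =
        Complex.I / 2 * Complex.exp (Complex.I * τ * (k : ℝ) ^ 2) *
            pinv (pc (eS (-τ) (pinv (cconj v))) (eS τ (pc w w))) k
          - Complex.I / 2 * pinv (pc (pc w w) (pinv (cconj v))) k
          + (τ : ℂ) * (if k = 0 then pc (cconj v) (pc w w) 0 else 0)
          + (τ : ℂ) * starRingEnd ℂ (v 0) *
              (if k = 0 then 0 else pc w w k) := by
  intro k
  have hv₁ := summable_norm_cconj hv.summable_norm
  have hw₂ := norm_pc_le hw.summable_norm hw.summable_norm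
  rw [integral_exp_mul_pc_eS hv₁ hw₂]
  rcases eq_or_ne k 0 with rfl | hk
  · rw [tsum_mul_integral_exp_zero]
    simp [pinv]
  · rw [tsum_mul_integral_exp_of_ne_zero hv₁ hw₂ τ hk, if_neg hk, if_neg hk]
    simp [cconj]

/-- **Exact Fourier identity for the second filtered integral:** for sufficiently
regular `v, w` on `𝕋` one has, mode by mode,
`∫₀^τ e^{-is∂ₓ²}[(e^{-is∂ₓ²} v̄)(e^{is∂ₓ²} w²)] ds
  = (i/2) e^{-iτ∂ₓ²}∂ₓ⁻¹[(e^{-iτ∂ₓ²}∂ₓ⁻¹v̄)(e^{iτ∂ₓ²}w²)] - (i/2)∂ₓ⁻¹(w² ∂ₓ⁻¹v̄)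
    + τ (v̄w²)^₀ + τ v̂₀bar (w² - (w²)^₀)`. -/
theorem second_filtered_integral_identity (τ : ℝ) (hτ : 0 < τ)
    (v w : ℤ → ℂ) (hv : Regular v) (hw : Regular w) :
    ∀ k : ℤ,
      (∫ s in (0 : ℝ)..τ,
          Complex.exp (Complex.I * s * (k : ℝ) ^ 2) *
            pc (eS (-s) (cconj v)) (eS s (pc w w)) k) =
        Complex.I / 2 * Complex.exp (Complex.I * τ * (k : ℝ) ^ 2) *
            pinv (pc (eS (-τ) (pinv (cconj v))) (eS τ (pc w w))) k
          - Complex.I / 2 * pinv (pc (pc w w) (pinv (cconj v))) k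
          + (τ : ℂ) * (if k = 0 then pc (cconj v) (pc w w) 0 else 0)
          + (τ : ℂ) * starRingEnd ℂ (v 0) *
              (if k = 0 then 0 else pc w w k) :=
  second_filtered_integral_identity_general τ v w hv hw
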